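/- Let H and X be complex Hilbert spaces, Q ∈ B(H) an idempotent, and π : B(H) → B(X) a unital *-algebra homomorphism. Then π(Q) is an idempotent and s(π(Q)) = π(s(Q)). -/

import Mathlib

/- For an idempotent `Q` on a complex Hilbert space `H`, we define (in `B(H)`):
the orthogonal projection onto the closure of the range of an operator,
the range projection `P_{ran Q} = Q (Q + Q* - 1)⁻¹`,
`|Q*| = (Q Q*)^{1/2}`, its Moore-Penrose inverse
`|Q*|^† = (P_{ran Q} P_{ran Q*} P_{ran Q})^{1/2}`,
the matched projection `m(Q) = (1/2)(|Q*| + Q*) |Q*|^† (|Q*| + 1)⁻¹ (|Q*| + Q)`,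
and the supplementary projection `s(Q) = m(2 P_{ran Q} - Q)`. -/

noncomputable section

namespace QPP

variable {H : Type*} [NormedAddCommGroup H] [InnerProductSpace ℂ H] [CompleteSpace H]

/-- The orthogonal projection onto the closure of the range of `T`, as an element of `B(H)`. -/
def closRangeProj (T : H →L[ℂ] H) : H →L[ℂ] H :=
  letI K := (LinearMap.range (T : H →ₗ[ℂ] H)).topologicalClosure
  haveI : CompleteSpace K := (LinearMap.range (T : H →ₗ[ℂ] H)).isClosed_topologicalClosure.isComplete.completeSpace_coe
  K.subtypeL ∘L K.orthogonalProjectionOnto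

/-- The range projection `P_{ran Q} = Q (Q + Q* - 1)⁻¹` of an idempotent `Q`.  (For an
idempotent `Q` the operator `Q + Q* - 1` is invertible, so `Ring.inverse` is its inverse.) -/
def rangeProj (Q : H →L[ℂ] H) : H →L[ℂ] H :=
  Q * Ring.inverse (Q + star Q - 1)

/-- `|Q*| = (Q Q*)^{1/2}`. -/
def absStar (Q : H →L[ℂ] H) : H →L[ℂ] H :=
  CFC.sqrt (Q * star Q)

/-- `|Q*|^† = (P_{ran Q} P_{ran Q*} P_{ran Q})^{1/2}`, the Moore-Penrose inverse of `|Q*|`. -/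
def absStarPinv (Q : H →L[ℂ] H) : H →L[ℂ] H :=
  CFC.sqrt (rangeProj Q * rangeProj (star Q) * rangeProj Q)

/-- The matched projection `m(Q) = (1/2)(|Q*| + Q*) |Q*|^† (|Q*| + 1)⁻¹ (|Q*| + Q)`. -/
def matchedProj (Q : H →L[ℂ] H) : H →L[ℂ] H :=
  (2 : ℂ)⁻¹ • ((absStar Q + star Q) * absStarPinv Q * Ring.inverse (absStar Q + 1)
      * (absStar Q + Q))

/-- The supplementary projection `s(Q) = m(2 P_{ran Q} - Q)`. -/
def suppProj (Q : H →L[ℂ] H) : H →L[ℂ] H :=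
  matchedProj (2 * rangeProj Q - Q)

end QPP

/-! Every ingredient of `s(Q)` is obtained from `Q` by *-algebra operations, inverses of
invertible elements and square roots of positive elements, and a unital *-homomorphism commutes
with all three. So the proof only has to check that the relevant arguments are invertible,
resp. positive: `Q + Q* - 1` is invertible since its square is `1 + (Q - Q*)(Q - Q*)*`, and
`P_{ran Q} P_{ran Q*} P_{ran Q}` is positive as a conjugate of a projection. -/

theorem map_ringInverse {M N F : Type*} [MonoidWithZero M] [MonoidWithZero N] [FunLike F M N]
    [MonoidHomClass F M N] (f : F) {a : M} (ha : IsUnit a) :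
    f (Ring.inverse a) = Ring.inverse (f a) := by
  obtain ⟨u, rfl⟩ := ha
  rw [Ring.inverse_unit]
  exact (Ring.inverse_unit (Units.map (f : M →* N) u)).symm

theorem IsIdempotentElem.two_mul_sub {R : Type*} [Ring R] {p q : R} (hp : IsIdempotentElem p)
    (hq : IsIdempotentElem q) (hpq : p * q = q) (hqp : q * p = p) :
    IsIdempotentElem (2 * p - q) := by
  unfold IsIdempotentElem
  noncomm_ring [hp.eq, hq.eq, hpq, hqp]

section StarRing

variable {R : Type*} [Ring R] [StarRing R] {q : R}

theorem add_star_sub_one_mul_self_of_isIdempotentElem (hq : IsIdempotentElem q) :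
    (q + star q - 1) * (q + star q - 1) = 1 + (q - star q) * star (q - star q) := by
  simp only [star_sub, star_star]
  noncomm_ring [hq.eq, hq.star.eq]

theorem add_star_sub_one_mul_of_isIdempotentElem (hq : IsIdempotentElem q) :
    (q + star q - 1) * q = star q * q := by
  noncomm_ring [hq.eq]

theorem semiconjBy_add_star_sub_one_of_isIdempotentElem (hq : IsIdempotentElem q) :
    SemiconjBy (q + star q - 1) q (star q) := by
  unfold SemiconjBy
  noncomm_ring [hq.eq, hq.star.eq]

theorem mul_inverse_add_star_sub_one_of_isIdempotentElem (hq : IsIdempotentElem q)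
    (hu : IsUnit (q + star q - 1)) :
    q * Ring.inverse (q + star q - 1) = Ring.inverse (q + star q - 1) * star q := by
  rw [← hu.unit_spec, Ring.inverse_unit]
  exact (semiconjBy_add_star_sub_one_of_isIdempotentElem hq).units_inv_symm_left.eq.symm

end StarRing

section CStarAlgebra

variable {A : Type*} [CStarAlgebra A] [PartialOrder A] [StarOrderedRing A]

theorem isUnit_add_star_sub_one_of_isIdempotentElem {q : A} (hq : IsIdempotentElem q) :
    IsUnit (q + star q - 1) := by
  have h : IsUnit ((q + star q - 1) * (q + star q - 1)) := by
    rw [add_star_sub_one_mul_self_of_isIdempotentElem hq]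
    exact CStarAlgebra.isUnit_of_le 1 (le_add_of_nonneg_right (mul_star_self_nonneg _))
      isStrictlyPositive_one
  exact isUnit_mul_self_iff.mp h

theorem isUnit_sqrt_add_one (a : A) : IsUnit (CFC.sqrt a + 1) :=
  CStarAlgebra.isUnit_of_le 1 (le_add_of_nonneg_left (CFC.sqrt_nonneg _)) isStrictlyPositive_one

variable {B : Type*} [CStarAlgebra B] [PartialOrder B] [StarOrderedRing B]

theorem StarAlgHom.map_sqrt (φ : A →⋆ₐ[ℂ] B) {a : A} (ha : 0 ≤ a) :
    φ (CFC.sqrt a) = CFC.sqrt (φ a) := by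
  have hφ : 0 ≤ φ (CFC.sqrt a) := by simpa using OrderHomClass.mono φ (CFC.sqrt_nonneg a)
  refine (CFC.sqrt_unique ?_ hφ).symm
  rw [← map_mul, CFC.sqrt_mul_sqrt_self a ha]

end CStarAlgebra

namespace QPP

variable {H : Type*} [NormedAddCommGroup H] [InnerProductSpace ℂ H] [CompleteSpace H]
  {Q : H →L[ℂ] H}

theorem rangeProj_mul_self (hQ : IsIdempotentElem Q) : rangeProj Q * Q = Q := by
  have hUnit := isUnit_add_star_sub_one_of_isIdempotentElem hQ
  rw [rangeProj, mul_inverse_add_star_sub_one_of_isIdempotentElem hQ hUnit, mul_assoc,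
    ← add_star_sub_one_mul_of_isIdempotentElem hQ, ← mul_assoc,
    Ring.inverse_mul_cancel _ hUnit, one_mul]

theorem mul_rangeProj (hQ : IsIdempotentElem Q) : Q * rangeProj Q = rangeProj Q := by
  rw [rangeProj, ← mul_assoc, hQ.eq]

theorem isStarProjection_rangeProj (hQ : IsIdempotentElem Q) :
    IsStarProjection (rangeProj Q) where
  isIdempotentElem := by
    unfold IsIdempotentElem
    nth_rewrite 2 [rangeProj]
    rw [← mul_assoc, rangeProj_mul_self hQ, rangeProj]
  isSelfAdjoint := by
    have hu : IsSelfAdjoint (Q + star Q - 1) := (IsSelfAdjoint.add_star_self Q).sub (.one _)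
    rw [IsSelfAdjoint, rangeProj, star_mul, ← Ring.inverse_star, hu.star_eq,
      mul_inverse_add_star_sub_one_of_isIdempotentElem hQ
        (isUnit_add_star_sub_one_of_isIdempotentElem hQ)]

theorem isIdempotentElem_two_mul_rangeProj_sub (hQ : IsIdempotentElem Q) :
    IsIdempotentElem (2 * rangeProj Q - Q) :=
  (isStarProjection_rangeProj hQ).isIdempotentElem.two_mul_sub hQ (rangeProj_mul_self hQ)
    (mul_rangeProj hQ)

theorem rangeProj_mul_rangeProj_star_mul_rangeProj_nonneg (hQ : IsIdempotentElem Q) :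
    0 ≤ rangeProj Q * rangeProj (star Q) * rangeProj Q :=
  (isStarProjection_rangeProj hQ).isSelfAdjoint.conjugate_nonneg
    (isStarProjection_rangeProj hQ.star).nonneg

variable {X : Type*} [NormedAddCommGroup X] [InnerProductSpace ℂ X] [CompleteSpace X]
  (π : (H →L[ℂ] H) →⋆ₐ[ℂ] (X →L[ℂ] X))

theorem map_rangeProj (hQ : IsIdempotentElem Q) : π (rangeProj Q) = rangeProj (π Q) := by
  rw [rangeProj, map_mul, map_ringInverse π (isUnit_add_star_sub_one_of_isIdempotentElem hQ),
    map_sub, map_add, map_star, map_one, rangeProj]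

theorem map_absStar (Q : H →L[ℂ] H) : π (absStar Q) = absStar (π Q) := by
  rw [absStar, π.map_sqrt (mul_star_self_nonneg Q), map_mul, map_star, absStar]

theorem map_absStarPinv (hQ : IsIdempotentElem Q) : π (absStarPinv Q) = absStarPinv (π Q) := by
  rw [absStarPinv, π.map_sqrt (rangeProj_mul_rangeProj_star_mul_rangeProj_nonneg hQ), map_mul,
    map_mul, map_rangeProj π hQ, map_rangeProj π hQ.star, map_star, absStarPinv]

theorem map_matchedProj (hQ : IsIdempotentElem Q) : π (matchedProj Q) = matchedProj (π Q) := by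
  rw [matchedProj, map_smul, map_mul, map_mul, map_mul, map_add, map_add,
    map_ringInverse π (a := absStar Q + 1) (isUnit_sqrt_add_one _), map_add, map_one, map_star,
    map_absStar, map_absStarPinv π hQ, matchedProj]

theorem map_suppProj (hQ : IsIdempotentElem Q) : π (suppProj Q) = suppProj (π Q) := by
  rw [suppProj, map_matchedProj π (isIdempotentElem_two_mul_rangeProj_sub hQ), map_sub, map_mul,
    map_ofNat, map_rangeProj π hQ, suppProj]

end QPP

variable {H : Type*} [NormedAddCommGroup H] [InnerProductSpace ℂ H] [CompleteSpace H]

/-- If `π : B(H) → B(X)` is a unital *-algebra homomorphism and `Q` is an idempotent, then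
`π(Q)` is an idempotent and `s(π(Q)) = π(s(Q))`. -/
theorem suppProj_map_starAlgHom {X : Type*} [NormedAddCommGroup X] [InnerProductSpace ℂ X]
    [CompleteSpace X] (Q : H →L[ℂ] H) (hQ : IsIdempotentElem Q)
    (π : (H →L[ℂ] H) →⋆ₐ[ℂ] (X →L[ℂ] X)) :
    IsIdempotentElem (π Q) ∧ QPP.suppProj (π Q) = π (QPP.suppProj Q) :=
  ⟨hQ.map π, (QPP.map_suppProj π hQ).symm⟩

end
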